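/- arXiv:1505.05184 — 3 statements merged into one kernel-verified Lean document; each statement's English description precedes it below -/
import Mathlib

section
/- Let n inspection stations have nonnegative costs a : Fin n → ℝ and pass probabilities p : Fin n → ℝ with 0 ≤ p i < 1 for all i, and set q i = 1 - p i. For a permutation ρ of Fin n define the expected inspection cost of the series system under the sequence ρ as E(ρ) = Σ_{i : Fin n} a(ρ(i)) · ∏_{j < i} p(ρ(j)). If σ is a permutation such that the ratios a(σ(i))/q(σ(i)) are nondecreasing in i (i.e., for all i ≤ k, a(σ(i))/q(σ(i)) ≤ a(σ(k))/q(σ(k))), then for every permutation τ of Fin n, E(σ) ≤ E(τ). -/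
/-!
Read as a list of stations, a sequence has cost `cost (x :: l) = a x + p x * cost l`.
Interchanging two adjacent stations into ratio order never increases the cost, so the station of
least ratio `a x / q x` can be moved to the front of any sequence without increasing its cost; since
`p x ≥ 0`, induction on the rest of the sequence finishes the argument.
-/

/-- Expected inspection cost of a series system under inspection sequence `ρ`:
station `ρ i` is reached only if all earlier stations in the sequence were passed. -/
noncomputable def seriesCost {n : ℕ} (a p : Fin n → ℝ) (ρ : Equiv.Perm (Fin n)) : ℝ :=
  ∑ i : Fin n, a (ρ i) * ∏ j ∈ Finset.Iio i, p (ρ j)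

theorem Fin.prod_Iio_succ {M : Type*} [CommMonoid M] {n : ℕ} (g : Fin (n + 1) → M) (i : Fin n) :
    ∏ j ∈ Finset.Iio i.succ, g j = g 0 * ∏ j ∈ Finset.Iio i, g j.succ := by
  have : Finset.Iio i.succ = Finset.cons 0 ((Finset.Iio i).map (Fin.succEmb n)) (by simp) := by
    ext j
    cases j using Fin.cases <;> simp [Fin.succ_lt_succ_iff]
  rw [this, Finset.prod_cons, Finset.prod_map]
  rfl

section SeriesListCost

variable {α R : Type*} [CommSemiring R] (a p : α → R)

def seriesListCost : List α → R
  | [] => 0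
  | x :: l => a x + p x * seriesListCost l

@[simp]
theorem seriesListCost_nil : seriesListCost a p [] = 0 := rfl

@[simp]
theorem seriesListCost_cons (x : α) (l : List α) :
    seriesListCost a p (x :: l) = a x + p x * seriesListCost a p l := rfl

theorem sum_mul_prod_Iio_eq_seriesListCost_ofFn {n : ℕ} (f : Fin n → α) :
    ∑ i, a (f i) * ∏ j ∈ Finset.Iio i, p (f j) = seriesListCost a p (List.ofFn f) := by
  induction n with
  | zero => simp
  | succ n ih =>
    simp only [Fin.sum_univ_succ, Fin.prod_Iio_succ, List.ofFn_succ, seriesListCost_cons,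
      ← ih fun i => f i.succ, Finset.mul_sum]
    have hIio : Finset.Iio (0 : Fin (n + 1)) = ∅ :=
      Finset.Iio_eq_empty.mpr fun j _ => Fin.zero_le j
    simp only [hIio, Finset.prod_empty, mul_one, mul_left_comm]

variable {a p} [PartialOrder R] [IsOrderedRing R]

/-- The hypothesis is the ratio condition `a x / (1 - p x) ≤ a y / (1 - p y)` with the
denominators cleared. -/
theorem seriesListCost_swap_le {x y : α} (h : a x + p x * a y ≤ a y + p y * a x) (l : List α) :
    seriesListCost a p (x :: y :: l) ≤ seriesListCost a p (y :: x :: l) := by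
  have key : a x + p x * a y + p x * p y * seriesListCost a p l ≤
      a y + p y * a x + p y * p x * seriesListCost a p l := by
    rw [mul_comm (p y) (p x)]
    exact add_le_add_left h _
  simpa only [seriesListCost_cons, mul_add, ← mul_assoc, ← add_assoc] using key

theorem seriesListCost_cons_le_cons (hp : ∀ y, 0 ≤ p y) (x : α) {l l' : List α}
    (h : seriesListCost a p l ≤ seriesListCost a p l') :
    seriesListCost a p (x :: l) ≤ seriesListCost a p (x :: l') :=
  add_le_add_right (mul_le_mul_of_nonneg_left h (hp x)) (a x)

theorem seriesListCost_cons_append_le (hp : ∀ y, 0 ≤ p y) {x : α} {u : List α}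
    (h : ∀ y ∈ u, a x + p x * a y ≤ a y + p y * a x) (v : List α) :
    seriesListCost a p (x :: (u ++ v)) ≤ seriesListCost a p (u ++ x :: v) := by
  induction u with
  | nil => rfl
  | cons y u ih =>
    calc seriesListCost a p (x :: y :: (u ++ v))
        ≤ seriesListCost a p (y :: x :: (u ++ v)) := seriesListCost_swap_le (h y (by simp)) _
      _ ≤ seriesListCost a p (y :: (u ++ x :: v)) :=
        seriesListCost_cons_le_cons hp y (ih fun z hz => h z (List.mem_cons_of_mem y hz))

theorem seriesListCost_le_of_perm (hp : ∀ y, 0 ≤ p y) {l l' : List α}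
    (hl : l.Pairwise fun x y => a x + p x * a y ≤ a y + p y * a x) (h : l.Perm l') :
    seriesListCost a p l ≤ seriesListCost a p l' := by
  induction l generalizing l' with
  | nil => rw [List.nil_perm.mp h]
  | cons x t ih =>
    obtain ⟨hx, ht⟩ := List.pairwise_cons.mp hl
    obtain ⟨u, v, rfl⟩ := List.append_of_mem (h.subset List.mem_cons_self)
    have htuv : t.Perm (u ++ v) := (h.trans List.perm_middle).cons_inv
    calc seriesListCost a p (x :: t)
        ≤ seriesListCost a p (x :: (u ++ v)) := seriesListCost_cons_le_cons hp x (ih ht htuv)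
      _ ≤ seriesListCost a p (u ++ x :: v) := by
          refine seriesListCost_cons_append_le hp (fun y hy => hx y ?_) v
          exact htuv.symm.subset (List.mem_append_left v hy)

end SeriesListCost

theorem series_ratio_sequence_optimal_general {n : ℕ} (a p q : Fin n → ℝ)
    (hp : ∀ i, 0 ≤ p i) (hp1 : ∀ i, p i < 1)
    (hq : ∀ i, q i = 1 - p i)
    (σ : Equiv.Perm (Fin n))
    (hσ : ∀ i k : Fin n, i ≤ k → a (σ i) / q (σ i) ≤ a (σ k) / q (σ k)) :
    ∀ τ : Equiv.Perm (Fin n), seriesCost a p σ ≤ seriesCost a p τ := by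
  intro τ
  have hsorted : (List.ofFn σ).Pairwise fun x y => a x + p x * a y ≤ a y + p y * a x := by
    refine List.pairwise_ofFn.mpr fun i k hik => ?_
    have hratio := hσ i k hik.le
    rw [hq, hq, div_le_div_iff₀ (by linarith [hp1 (σ i)]) (by linarith [hp1 (σ k)])] at hratio
    linarith
  have hperm : (List.ofFn σ).Perm (List.ofFn τ) :=
    (σ.ofFn_comp_perm id).trans (τ.ofFn_comp_perm id).symm
  simpa only [seriesCost, sum_mul_prod_Iio_eq_seriesListCost_ofFn] using
    seriesListCost_le_of_perm hp hsorted hperm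

/-- If the ratios `a (σ i) / q (σ i)` (with `q i = 1 - p i`) are nondecreasing along the
sequence `σ`, then `σ` minimizes the expected inspection cost of the series system. -/
theorem series_ratio_sequence_optimal {n : ℕ} (a p q : Fin n → ℝ)
    (ha : ∀ i, 0 ≤ a i) (hp : ∀ i, 0 ≤ p i) (hp1 : ∀ i, p i < 1)
    (hq : ∀ i, q i = 1 - p i)
    (σ : Equiv.Perm (Fin n))
    (hσ : ∀ i k : Fin n, i ≤ k → a (σ i) / q (σ i) ≤ a (σ k) / q (σ k)) :
    ∀ τ : Equiv.Perm (Fin n), seriesCost a p σ ≤ seriesCost a p τ :=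
  series_ratio_sequence_optimal_general a p q hp hp1 hq σ hσ
end

section
/- Let n inspection stations have costs a : Fin n → ℝ and pass probabilities p : Fin n → ℝ with 0 ≤ p i ≤ 1, and set q i = 1 - p i. For a permutation ρ of Fin n define E(ρ) = Σ_{i : Fin n} a(ρ(i)) · ∏_{j < i} p(ρ(j)). If ρ' is obtained from ρ by composing with the transposition of two adjacent positions k and k+1 (k+1 < n), then E(ρ') - E(ρ) = (∏_{j < k} p(ρ(j))) · (a(ρ(k+1))·q(ρ(k)) - a(ρ(k))·q(ρ(k+1))). In particular, if a(ρ(k))/q(ρ(k)) ≤ a(ρ(k+1))/q(ρ(k+1)) with q(ρ(k)), q(ρ(k+1)) > 0 and a ≥ 0, then E(ρ) ≤ E(ρ'). -/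
open Finset Equiv

section PrefixProduct

variable {ι M : Type*} [LinearOrder ι] [LocallyFiniteOrderBot ι] [CommMonoid M]

theorem prod_Iio_swap_of_le {x y i : ι} (hx : i ≤ x) (hy : i ≤ y) (f : ι → M) :
    ∏ j ∈ Iio i, f (swap x y j) = ∏ j ∈ Iio i, f j :=
  prod_congr rfl fun j hj => by
    have hj : j < i := mem_Iio.mp hj
    rw [swap_apply_of_ne_of_ne (hj.trans_le hx).ne (hj.trans_le hy).ne]

theorem prod_Iio_swap_of_lt {x y i : ι} (hx : x < i) (hy : y < i) (f : ι → M) :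
    ∏ j ∈ Iio i, f (swap x y j) = ∏ j ∈ Iio i, f j := by
  refine Perm.prod_comp _ _ f fun j hj => ?_
  rcases (swap_apply_ne_self_iff.mp hj).2 with rfl | rfl <;> simpa

theorem CovBy.prod_Iio_eq {x y : ι} (h : x ⋖ y) (f : ι → M) :
    ∏ j ∈ Iio y, f j = f x * ∏ j ∈ Iio x, f j := by
  have hIio : Iio y = Iic x := by rw [← coe_inj, coe_Iio, coe_Iic, h.Iio_eq]
  rw [← prod_insert notMem_Iio_self, Iio_insert, hIio]

end PrefixProduct

theorem seriesCost_mul_swap_sub {n : ℕ} (a p : Fin n → ℝ) (ρ : Perm (Fin n)) {x y : Fin n}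
    (h : x ⋖ y) :
    seriesCost a p (ρ * swap x y) - seriesCost a p ρ =
      (∏ j ∈ Iio x, p (ρ j)) * (a (ρ y) * (1 - p (ρ x)) - a (ρ x) * (1 - p (ρ y))) := by
  have hprefix (i : Fin n) (hix : i ≠ x) (hiy : i ≠ y) :
      ∏ j ∈ Iio i, p (ρ (swap x y j)) = ∏ j ∈ Iio i, p (ρ j) := by
    rcases hix.lt_or_gt with hix | hxi
    · exact prod_Iio_swap_of_le hix.le (hix.trans h.lt).le (fun j => p (ρ j))
    · exact prod_Iio_swap_of_lt hxi ((h.ge_of_gt hxi).lt_of_ne hiy.symm) (fun j => p (ρ j))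
  have hterm (i : Fin n) (hi : i ≠ x ∧ i ≠ y) :
      a ((ρ * swap x y) i) * ∏ j ∈ Iio i, p ((ρ * swap x y) j) -
        a (ρ i) * ∏ j ∈ Iio i, p (ρ j) = 0 := by
    simp only [Perm.mul_apply, swap_apply_of_ne_of_ne hi.1 hi.2, hprefix i hi.1 hi.2, sub_self]
  have hprefix_x : ∏ j ∈ Iio x, p (ρ (swap x y j)) = ∏ j ∈ Iio x, p (ρ j) :=
    prod_Iio_swap_of_le le_rfl h.lt.le (fun j => p (ρ j))
  unfold seriesCost
  rw [← sum_sub_distrib, Fintype.sum_eq_add x y h.ne hterm]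
  simp only [Perm.mul_apply, swap_apply_left, swap_apply_right, h.prod_Iio_eq, hprefix_x]
  ring

theorem series_adjacent_interchange_general {n : ℕ} (a p q : Fin n → ℝ)
    (hp : ∀ i, 0 ≤ p i) (hq : ∀ i, q i = 1 - p i)
    (k : ℕ) (hk : k + 1 < n) (ρ : Equiv.Perm (Fin n))
    (ρ' : Equiv.Perm (Fin n))
    (hρ' : ρ' = ρ * Equiv.swap (⟨k, Nat.lt_of_succ_lt hk⟩ : Fin n) (⟨k + 1, hk⟩ : Fin n)) :
    seriesCost a p ρ' - seriesCost a p ρ =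
      (∏ j ∈ Finset.Iio (⟨k, Nat.lt_of_succ_lt hk⟩ : Fin n), p (ρ j)) *
        (a (ρ ⟨k + 1, hk⟩) * q (ρ ⟨k, Nat.lt_of_succ_lt hk⟩) -
          a (ρ ⟨k, Nat.lt_of_succ_lt hk⟩) * q (ρ ⟨k + 1, hk⟩)) ∧
    ((∀ i, 0 ≤ a i) → 0 < q (ρ ⟨k, Nat.lt_of_succ_lt hk⟩) →
      0 < q (ρ ⟨k + 1, hk⟩) →
      a (ρ ⟨k, Nat.lt_of_succ_lt hk⟩) / q (ρ ⟨k, Nat.lt_of_succ_lt hk⟩) ≤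
        a (ρ ⟨k + 1, hk⟩) / q (ρ ⟨k + 1, hk⟩) →
      seriesCost a p ρ ≤ seriesCost a p ρ') := by
  have hcov : (⟨k, Nat.lt_of_succ_lt hk⟩ : Fin n) ⋖ ⟨k + 1, hk⟩ :=
    Fin.covBy_iff.mpr (Order.covBy_add_one k)
  have hdiff := seriesCost_mul_swap_sub a p ρ hcov
  simp only [← hq, ← hρ'] at hdiff
  refine ⟨hdiff, fun _ hqk hqk1 hratio => sub_nonneg.mp ?_⟩
  rw [hdiff]
  exact mul_nonneg (prod_nonneg fun j _ => hp (ρ j))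
    (sub_nonneg.mpr ((div_le_div_iff₀ hqk hqk1).mp hratio))

/-- Interchanging two adjacent stations at positions `k` and `k+1` of the sequence `ρ`
changes the expected series inspection cost by
`(∏_{j<k} p (ρ j)) * (a (ρ (k+1)) * q (ρ k) - a (ρ k) * q (ρ (k+1)))`; in particular,
if `a (ρ k) / q (ρ k) ≤ a (ρ (k+1)) / q (ρ (k+1))` (with positive `q`'s and nonnegative
costs), then `ρ` is no worse than the interchanged sequence. -/
theorem series_adjacent_interchange {n : ℕ} (a p q : Fin n → ℝ)
    (hp : ∀ i, 0 ≤ p i) (hp1 : ∀ i, p i ≤ 1) (hq : ∀ i, q i = 1 - p i)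
    (k : ℕ) (hk : k + 1 < n) (ρ : Equiv.Perm (Fin n))
    (ρ' : Equiv.Perm (Fin n))
    (hρ' : ρ' = ρ * Equiv.swap (⟨k, Nat.lt_of_succ_lt hk⟩ : Fin n) (⟨k + 1, hk⟩ : Fin n)) :
    seriesCost a p ρ' - seriesCost a p ρ =
      (∏ j ∈ Finset.Iio (⟨k, Nat.lt_of_succ_lt hk⟩ : Fin n), p (ρ j)) *
        (a (ρ ⟨k + 1, hk⟩) * q (ρ ⟨k, Nat.lt_of_succ_lt hk⟩) -
          a (ρ ⟨k, Nat.lt_of_succ_lt hk⟩) * q (ρ ⟨k + 1, hk⟩)) ∧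
    ((∀ i, 0 ≤ a i) → 0 < q (ρ ⟨k, Nat.lt_of_succ_lt hk⟩) →
      0 < q (ρ ⟨k + 1, hk⟩) →
      a (ρ ⟨k, Nat.lt_of_succ_lt hk⟩) / q (ρ ⟨k, Nat.lt_of_succ_lt hk⟩) ≤
        a (ρ ⟨k + 1, hk⟩) / q (ρ ⟨k + 1, hk⟩) →
      seriesCost a p ρ ≤ seriesCost a p ρ') :=
  series_adjacent_interchange_general a p q hp hq k hk ρ ρ' hρ'
end

section
/- Let n inspection stations have nonnegative costs a : Fin n → ℝ and probabilities p : Fin n → ℝ with 0 < p i ≤ 1 for all i, and set q i = 1 - p i. For a permutation ρ of Fin n define the expected inspection cost of the parallel system under the sequence ρ as E(ρ) = Σ_{i : Fin n} a(ρ(i)) · ∏_{j < i} q(ρ(j)). If σ is a permutation such that the ratios a(σ(i))/p(σ(i)) are nondecreasing in i, then for every permutation τ of Fin n, E(σ) ≤ E(τ). -/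
/-!
Read a sequence as a list: its cost satisfies `E (x :: l) = a x + q x * E l`. Exchanging two
adjacent stations `x, y` changes the cost by a nonnegative multiple of `a y * p x - a x * p y`,
so putting the station of smaller ratio `a / p` first never costs more. Hence the first station
of the ratio order can be moved to the front of any sequence without increasing the cost, and
induction on the length, using `q ≥ 0`, shows that the ratio order is optimal.
-/

/-- Expected inspection cost of a parallel system under inspection sequence `ρ`:
station `ρ i` is reached only if all earlier stations in the sequence were failed. -/
noncomputable def parallelCost {n : ℕ} (a q : Fin n → ℝ) (ρ : Equiv.Perm (Fin n)) : ℝ :=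
  ∑ i : Fin n, a (ρ i) * ∏ j ∈ Finset.Iio i, q (ρ j)

section ListCost

variable {α : Type*} (a q : α → ℝ)

noncomputable def parallelListCost : List α → ℝ
  | [] => 0
  | x :: l => a x + q x * parallelListCost l

theorem sum_mul_prod_Iio_eq_parallelListCost_ofFn {n : ℕ} (f : Fin n → α) :
    ∑ i, a (f i) * ∏ j ∈ Finset.Iio i, q (f j) = parallelListCost a q (List.ofFn f) := by
  induction n with
  | zero => simp [parallelListCost]
  | succ n ih =>
    simp only [Fin.sum_univ_succ, Fin.prod_Iio_succ, List.ofFn_succ, parallelListCost,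
      ← ih fun i => f i.succ, Finset.mul_sum]
    simp [← bot_eq_zero, mul_left_comm]

variable {a q}

theorem parallelListCost_cons_cons_le_swap {x y : α} (hxy : a x * (1 - q y) ≤ a y * (1 - q x))
    (l : List α) :
    parallelListCost a q (x :: y :: l) ≤ parallelListCost a q (y :: x :: l) := by
  simp only [parallelListCost]
  nlinarith

theorem parallelListCost_cons_append_le (hq0 : ∀ z, 0 ≤ q z) {x : α} {u : List α}
    (hu : ∀ y ∈ u, a x * (1 - q y) ≤ a y * (1 - q x)) (v : List α) :
    parallelListCost a q (x :: (u ++ v)) ≤ parallelListCost a q (u ++ x :: v) := by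
  induction u with
  | nil => rfl
  | cons y u ih =>
    calc parallelListCost a q (x :: y :: (u ++ v))
        ≤ parallelListCost a q (y :: x :: (u ++ v)) :=
          parallelListCost_cons_cons_le_swap (hu y (by simp)) _
      _ = a y + q y * parallelListCost a q (x :: (u ++ v)) := rfl
      _ ≤ a y + q y * parallelListCost a q (u ++ x :: v) := by
          gcongr
          · exact hq0 y
          · exact ih fun z hz => hu z (by simp [hz])
      _ = parallelListCost a q (y :: u ++ x :: v) := rfl

theorem parallelListCost_le_of_perm (hq0 : ∀ z, 0 ≤ q z) {l l' : List α}
    (hl : l.Pairwise fun x y => a x * (1 - q y) ≤ a y * (1 - q x)) (hperm : l.Perm l') :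
    parallelListCost a q l ≤ parallelListCost a q l' := by
  induction l generalizing l' with
  | nil => rw [List.nil_perm.mp hperm]
  | cons x t ih =>
    obtain ⟨hx, ht⟩ := List.pairwise_cons.mp hl
    obtain ⟨u, v, rfl⟩ := List.append_of_mem (hperm.subset List.mem_cons_self)
    have hrest : (u ++ v).Perm t := (List.perm_cons x).mp (List.perm_middle.symm.trans hperm.symm)
    calc parallelListCost a q (x :: t)
        = a x + q x * parallelListCost a q t := rfl
      _ ≤ a x + q x * parallelListCost a q (u ++ v) := by
          gcongr
          · exact hq0 x
          · exact ih ht hrest.symm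
      _ ≤ parallelListCost a q (u ++ x :: v) :=
          parallelListCost_cons_append_le hq0
            (fun y hy => hx y (hrest.subset (List.mem_append_left v hy))) v

end ListCost

theorem parallelCost_eq_parallelListCost {n : ℕ} (a q : Fin n → ℝ) (ρ : Equiv.Perm (Fin n)) :
    parallelCost a q ρ = parallelListCost a q (List.ofFn ρ) :=
  sum_mul_prod_Iio_eq_parallelListCost_ofFn a q ρ

theorem parallel_ratio_sequence_optimal_general {n : ℕ} (a p q : Fin n → ℝ)
    (hp : ∀ i, 0 < p i) (hp1 : ∀ i, p i ≤ 1)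
    (hq : ∀ i, q i = 1 - p i)
    (σ : Equiv.Perm (Fin n))
    (hσ : ∀ i k : Fin n, i ≤ k → a (σ i) / p (σ i) ≤ a (σ k) / p (σ k)) :
    ∀ τ : Equiv.Perm (Fin n), parallelCost a q σ ≤ parallelCost a q τ := by
  intro τ
  have hq0 : ∀ i, 0 ≤ q i := fun i => by linarith [hq i, hp1 i]
  have hsorted : (List.ofFn σ).Pairwise fun x y => a x * (1 - q y) ≤ a y * (1 - q x) :=
    List.pairwise_ofFn.mpr fun i k hik => by
      simpa only [hq, sub_sub_cancel, div_le_div_iff₀ (hp _) (hp _)] using hσ i k hik.le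
  have hperm : (List.ofFn σ).Perm (List.ofFn τ) :=
    (σ.ofFn_comp_perm id).trans (τ.ofFn_comp_perm id).symm
  rw [parallelCost_eq_parallelListCost, parallelCost_eq_parallelListCost]
  exact parallelListCost_le_of_perm hq0 hsorted hperm

/-- If the ratios `a (σ i) / p (σ i)` are nondecreasing along the sequence `σ`, then `σ`
minimizes the expected inspection cost of the parallel system. -/
theorem parallel_ratio_sequence_optimal {n : ℕ} (a p q : Fin n → ℝ)
    (ha : ∀ i, 0 ≤ a i) (hp : ∀ i, 0 < p i) (hp1 : ∀ i, p i ≤ 1)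
    (hq : ∀ i, q i = 1 - p i)
    (σ : Equiv.Perm (Fin n))
    (hσ : ∀ i k : Fin n, i ≤ k → a (σ i) / p (σ i) ≤ a (σ k) / p (σ k)) :
    ∀ τ : Equiv.Perm (Fin n), parallelCost a q σ ≤ parallelCost a q τ :=
  parallel_ratio_sequence_optimal_general a p q hp hp1 hq σ hσ
end
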